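/- For every rooted tree T, the probability that Bernoulli(q)-site percolation on T contains a path from the root to a leaf equals p_T(q) = 1 - P_T(q, -1), for q ∈ [0,1]. -/

import Mathlib

open MvPolynomial

/-- A rooted tree: a root node together with a list of branches. -/
inductive RTree : Type
  | node : List RTree → RTree

/-- A rooted forest: a finite (possibly empty) list of rooted trees. -/
abbrev RForest : Type := List RTree

namespace RTree

/-- Number of vertices of a rooted tree. -/
def size : RTree → ℕ
  | .node ts => 1 + (ts.attach.map fun s => size s.1).sum

  decreasing_by
    all_goals
      simp only [RTree.node.sizeOf_spec]
      have := List.sizeOf_lt_of_mem s.2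
      omega

/-- Number of leaves of a rooted tree. -/
def leafCount : RTree → ℕ
  | .node [] => 1
  | .node (t :: ts) => ((t :: ts).attach.map fun s => leafCount s.1).sum

  decreasing_by
    all_goals
      simp only [RTree.node.sizeOf_spec]
      have := List.sizeOf_lt_of_mem s.2
      omega

/-- The bivariate generating polynomial `P_T(x,y)` of leaf-induced subtrees of `T`,
counted by number of vertices (`X 0`) and number of leaves (`X 1`). -/
noncomputable def Ptree : RTree → MvPolynomial (Fin 2) ℤ
  | .node [] => 1 + X 0 * X 1
  | .node (t :: ts) =>
      1 - X 0 + X 0 * ((t :: ts).attach.map fun s => Ptree s.1).prod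

  decreasing_by
    all_goals
      simp only [RTree.node.sizeOf_spec]
      have := List.sizeOf_lt_of_mem s.2
      omega

/-- The polynomial `p_T(x) = 1 - P_T(x,-1)`. -/
noncomputable def pPol (T : RTree) : Polynomial ℤ :=
  1 - MvPolynomial.aeval ![Polynomial.X, -1] (Ptree T)

/-- The bivariate generating polynomial `S_T(x,y)` of subtrees of `T` (empty or connected
containing the root), counted by vertices (`X 0`) and boundary vertices (`X 1`). -/
noncomputable def Stree : RTree → MvPolynomial (Fin 2) ℤ
  | .node ts => X 1 + X 0 * (ts.attach.map fun s => Stree s.1).prod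

  decreasing_by
    all_goals
      simp only [RTree.node.sizeOf_spec]
      have := List.sizeOf_lt_of_mem s.2
      omega

/-- The bivariate generating polynomial `A_T(x,y)` of admissible subtrees of `T`,
counted by vertices (`X 0`) and boundary vertices (`X 1`). -/
noncomputable def Atree : RTree → MvPolynomial (Fin 2) ℤ
  | .node [] => X 1
  | .node (t :: ts) =>
      X 1 + X 0 * ((t :: ts).attach.map fun s => Atree s.1).prod

  decreasing_by
    all_goals
      simp only [RTree.node.sizeOf_spec]
      have := List.sizeOf_lt_of_mem s.2
      omega

/-- The trivariate polynomial `M_T(x,y,z)` (with `x = X 0`, `y = X 1`, `z = X 2`). -/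
noncomputable def Mtree : RTree → MvPolynomial (Fin 3) ℤ
  | .node ts =>
      Polynomial.aeval (X 2) (pPol (.node ts)).divX +
        X 0 * ∑ i : Fin ts.length,
          Mtree (ts.get i) *
            ∏ j ∈ Finset.univ.erase i,
              MvPolynomial.rename Fin.castSucc (Atree (ts.get j))
  decreasing_by
    simp only [RTree.node.sizeOf_spec]
    have h : sizeOf (ts.get i) < sizeOf ts := List.sizeOf_lt_of_mem (List.get_mem ts i)
    omega

/-- Number of vertices in the stem of a rooted tree. -/
def stemCount : RTree → ℕ
  | .node [t] => 1 + stemCount t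
  | .node _ => 1

/-- Isomorphism of rooted trees. -/
def Iso : RTree → RTree → Prop
  | .node ts, .node us =>
      ∃ σ : Fin ts.length ≃ Fin us.length,
        ∀ i : Fin ts.length, Iso (ts.get i) (us.get (σ i))
  decreasing_by
    simp only [RTree.node.sizeOf_spec]
    have h : sizeOf (ts.get i) < sizeOf ts := List.sizeOf_lt_of_mem (List.get_mem ts i)
    omega

end RTree

namespace RForest

open RTree

/-- Number of vertices of a rooted forest. -/
def size (F : RForest) : ℕ := (F.map RTree.size).sum

/-- Number of leaves of a rooted forest. -/
def leafCount (F : RForest) : ℕ := (F.map RTree.leafCount).sum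

/-- The polynomial `P_F` of a rooted forest: product over components. -/
noncomputable def Pforest (F : RForest) : MvPolynomial (Fin 2) ℤ := (F.map Ptree).prod

/-- The polynomial `S_F` of a rooted forest: product over components. -/
noncomputable def Sforest (F : RForest) : MvPolynomial (Fin 2) ℤ := (F.map Stree).prod

/-- Number of vertices in the stem of a rooted forest (`0` unless the forest is a tree). -/
def stemCount : RForest → ℕ
  | [T] => RTree.stemCount T
  | _ => 0

/-- Isomorphism of rooted forests: a matching of the components by isomorphisms. -/
def Iso (F G : RForest) : Prop :=
  ∃ σ : Fin F.length ≃ Fin G.length,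
    ∀ i : Fin F.length, RTree.Iso (F.get i) (G.get (σ i))

end RForest


mutual
/-- The vertices of a rooted tree, addressed by their child-index paths from the root. -/
def posList : RTree → List (List ℕ)
  | .node ts => [] :: posListAux 0 ts

def posListAux : ℕ → List RTree → List (List ℕ)
  | _, [] => []
  | i, t :: ts => (posList t).map (List.cons i) ++ posListAux (i + 1) ts
end

/-!
Under Ber(q) site percolation the probability of an event `E` on the vertex set `V` is the sum
of `q ^ |S| * (1 - q) ^ (|V| - |S|)` over the retained sets `S ∈ E`; the weight factorises over
disjoint parts of `V`, so events depending on disjoint vertex sets are independent. A root-to-leaf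
path of `node [T₁, …, Tₖ]` is the root followed by a root-to-leaf path of some `Tᵢ`. Hence the
probability `b_T` that no such path is retained satisfies `b_T = 1 - q` for a leaf and
`b_T = 1 - q + q * ∏ᵢ b_{Tᵢ}` otherwise, which is the recursion defining `P_T(q, -1)`.
-/

section Percolation

open scoped Classical

variable {α : Type*}

noncomputable def percProb (q : ℝ) (V : Finset α) (E : Finset α → Prop) : ℝ :=
  ∑ S ∈ V.powerset.filter E, q ^ S.card * (1 - q) ^ (V.card - S.card)

variable {q : ℝ}

theorem percProb_congr {V : Finset α} {E E' : Finset α → Prop} (h : ∀ S ⊆ V, E S ↔ E' S) :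
    percProb q V E = percProb q V E' :=
  Finset.sum_congr (Finset.filter_congr fun S hS => h S (Finset.mem_powerset.mp hS)) fun _ _ => rfl

theorem percProb_true (V : Finset α) : percProb q V (fun _ => True) = 1 := by
  simp [percProb, Finset.sum_pow_mul_eq_add_pow]

theorem percProb_not (V : Finset α) (E : Finset α → Prop) :
    percProb q V (fun S => ¬ E S) = 1 - percProb q V E := by
  rw [eq_sub_iff_add_eq, ← percProb_true (q := q) V, percProb, percProb, percProb,
    Finset.sum_filter, Finset.sum_filter, Finset.sum_filter, ← Finset.sum_add_distrib]
  refine Finset.sum_congr rfl fun S _ => ?_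
  by_cases h : E S <;> simp [h]

theorem percProb_singleton (a : α) : percProb q {a} (fun S => a ∈ S) = q := by
  have : ({a} : Finset α).powerset = {∅, {a}} := by ext; simp [Finset.subset_singleton_iff]
  simp [percProb, this, Finset.filter_insert, Finset.filter_singleton]

theorem sum_powerset_union_of_disjoint [DecidableEq α] {A B : Finset α} (hAB : Disjoint A B)
    (f : Finset α → Finset α → ℝ) :
    ∑ S ∈ (A ∪ B).powerset, f (S ∩ A) (S ∩ B) = ∑ a ∈ A.powerset, ∑ b ∈ B.powerset, f a b := by
  rw [← Finset.sum_product']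
  have hAB' := Finset.disjoint_left.mp hAB
  refine Finset.sum_nbij' (fun S => (S ∩ A, S ∩ B)) (fun p => p.1 ∪ p.2) ?_ ?_ ?_ ?_ fun _ _ => rfl
  · intro S _
    simp [Finset.inter_subset_right]
  · intro p hp
    simp only [Finset.mem_product, Finset.mem_powerset] at hp ⊢
    exact Finset.union_subset_union hp.1 hp.2
  · intro S hS
    simp only [Finset.mem_powerset] at hS
    grind
  · intro p hp
    simp only [Finset.mem_product, Finset.mem_powerset] at hp
    ext x <;> grind

theorem percProb_union [DecidableEq α] {A B : Finset α} (hAB : Disjoint A B)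
    (E₁ E₂ : Finset α → Prop) :
    percProb q (A ∪ B) (fun S => E₁ (S ∩ A) ∧ E₂ (S ∩ B)) = percProb q A E₁ * percProb q B E₂ := by
  simp only [percProb, Finset.sum_filter, Finset.sum_mul_sum]
  rw [← sum_powerset_union_of_disjoint hAB]
  refine Finset.sum_congr rfl fun S hS => ?_
  have hcard : (S ∩ A).card + (S ∩ B).card = S.card := by
    rw [← Finset.card_union_of_disjoint
        (hAB.mono Finset.inter_subset_right Finset.inter_subset_right),
      ← Finset.inter_union_distrib_left, Finset.inter_eq_left.mpr (Finset.mem_powerset.mp hS)]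
  have hA := Finset.card_le_card (Finset.inter_subset_right (s₁ := S) (s₂ := A))
  have hB := Finset.card_le_card (Finset.inter_subset_right (s₁ := S) (s₂ := B))
  have hweight : q ^ S.card * (1 - q) ^ ((A ∪ B).card - S.card) =
      q ^ (S ∩ A).card * (1 - q) ^ (A.card - (S ∩ A).card) *
        (q ^ (S ∩ B).card * (1 - q) ^ (B.card - (S ∩ B).card)) := by
    rw [Finset.card_union_of_disjoint hAB, ← hcard,
      show A.card + B.card - ((S ∩ A).card + (S ∩ B).card)
        = (A.card - (S ∩ A).card) + (B.card - (S ∩ B).card) by omega]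
    ring
  split_ifs <;> simp_all

theorem percProb_image {β : Type*} [DecidableEq β] {φ : α → β} (hφ : Function.Injective φ)
    (V : Finset α) (E : Finset β → Prop) :
    percProb q (V.image φ) E = percProb q V (fun S => E (S.image φ)) := by
  simp only [percProb, Finset.sum_filter]
  rw [Finset.powerset_image, Finset.sum_image fun S _ T _ h => Finset.image_injective hφ h]
  simp only [Finset.card_image_of_injective _ hφ]

theorem percProb_biUnion {ι : Type*} [DecidableEq α] {s : Finset ι} {V : ι → Finset α}
    (hV : (s : Set ι).PairwiseDisjoint V) (E : ι → Finset α → Prop) :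
    percProb q (s.biUnion V) (fun S => ∀ i ∈ s, E i (S ∩ V i)) =
      ∏ i ∈ s, percProb q (V i) (E i) := by
  induction s using Finset.induction_on with
  | empty => simp [percProb_true]
  | insert a s ha ih =>
    rw [Finset.coe_insert, Set.pairwiseDisjoint_insert_of_notMem (by simpa using ha)] at hV
    have hdisj : Disjoint (V a) (s.biUnion V) := (Finset.disjoint_biUnion_right _ _ _).mpr hV.2
    rw [Finset.prod_insert ha, ← ih hV.1, ← percProb_union hdisj, Finset.biUnion_insert]
    refine percProb_congr fun S _ => ?_
    rw [Finset.forall_mem_insert]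
    refine and_congr_right' (forall₂_congr fun i hi => ?_)
    rw [Finset.inter_assoc, Finset.inter_eq_right.mpr (Finset.subset_biUnion_of_mem V hi)]

end Percolation

theorem mem_posListAux {l : List ℕ} : ∀ (k : ℕ) (ts : List RTree),
    l ∈ posListAux k ts ↔ ∃ i : Fin ts.length, ∃ p ∈ posList ts[i], l = (k + i) :: p
  | _, [] => by simp [posListAux]
  | k, t :: ts => by
    simp only [posListAux, List.mem_append, List.mem_map, mem_posListAux (k + 1) ts]
    erw [Fin.exists_fin_succ]
    simp [eq_comm, Nat.add_right_comm, Nat.add_assoc]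

theorem mem_posList_node {ts : List RTree} {l : List ℕ} :
    l ∈ posList (.node ts) ↔
      l = [] ∨ ∃ i : Fin ts.length, ∃ p ∈ posList ts[i], l = (i : ℕ) :: p := by
  simp [posList, mem_posListAux]

theorem nil_mem_posList (T : RTree) : [] ∈ posList T := by
  cases T
  simp [posList]

theorem cons_mem_posList_node {ts : List RTree} {i : Fin ts.length} {p : List ℕ} :
    (i : ℕ) :: p ∈ posList (.node ts) ↔ p ∈ posList ts[i] := by
  simp only [mem_posList_node, List.cons.injEq, reduceCtorEq, false_or]
  constructor
  · rintro ⟨j, p', hp', hij, rfl⟩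
    rwa [Fin.ext hij]
  · exact fun hp => ⟨i, p, hp, rfl, rfl⟩

theorem mem_posList_of_prefix : ∀ (T : RTree) {p r : List ℕ}, p ∈ posList T → r <+: p →
    r ∈ posList T
  | .node ts, p, r, hp, hr => by
    rcases mem_posList_node.mp hp with rfl | ⟨i, p', hp', rfl⟩
    · rw [List.prefix_nil.mp hr]
      exact nil_mem_posList _
    · rcases List.prefix_cons_iff.mp hr with rfl | ⟨r', rfl, hr'⟩
      · exact nil_mem_posList _
      · exact cons_mem_posList_node.mpr (mem_posList_of_prefix ts[i] hp' hr')
  termination_by T => T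
  decreasing_by
    simp only [RTree.node.sizeOf_spec, Fin.getElem_fin]
    have := List.sizeOf_lt_of_mem (List.getElem_mem i.2)
    omega

def subtreePos (ts : List RTree) (i : Fin ts.length) : Finset (List ℕ) :=
  (posList ts[i]).toFinset.image (List.cons i)

theorem toFinset_posList_node (ts : List RTree) :
    (posList (.node ts)).toFinset = {[]} ∪ Finset.univ.biUnion (subtreePos ts) := by
  ext l
  simp [subtreePos, mem_posList_node, eq_comm]

theorem pairwiseDisjoint_subtreePos (ts : List RTree) :
    (↑(Finset.univ : Finset (Fin ts.length)) : Set (Fin ts.length)).PairwiseDisjoint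
      (subtreePos ts) := by
  intro i _ j _ hij
  simp only [Function.onFun, subtreePos, Finset.disjoint_left, Finset.mem_image]
  rintro _ ⟨p, _, rfl⟩ ⟨r, _, hr⟩
  exact hij (Fin.ext (List.cons.inj hr).1.symm)

-- A vertex `p` of `T` is a leaf iff it has no first child `p ++ [0]`.
def HasOpenPath (T : RTree) (S : Set (List ℕ)) : Prop :=
  ∃ p ∈ posList T, p ++ [0] ∉ posList T ∧ ∀ r, r <+: p → r ∈ S

theorem hasOpenPath_inter {T : RTree} {S U : Set (List ℕ)} (hU : {p | p ∈ posList T} ⊆ U) :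
    HasOpenPath T (S ∩ U) ↔ HasOpenPath T S :=
  exists_congr fun _ => and_congr_right fun hp => and_congr_right' <| forall₂_congr fun _ hr =>
    and_iff_left (hU (mem_posList_of_prefix T hp hr))

theorem hasOpenPath_leaf {S : Set (List ℕ)} : HasOpenPath (.node []) S ↔ [] ∈ S := by
  simp [HasOpenPath, posList, posListAux]

theorem hasOpenPath_node {ts : List RTree} (hts : ts ≠ []) {S : Set (List ℕ)} :
    HasOpenPath (.node ts) S ↔
      [] ∈ S ∧ ∃ i : Fin ts.length, HasOpenPath ts[i] (List.cons i ⁻¹' S) := by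
  constructor
  · rintro ⟨p, hp, hleaf, hpS⟩
    refine ⟨hpS [] List.nil_prefix, ?_⟩
    rcases mem_posList_node.mp hp with rfl | ⟨i, p', hp', rfl⟩
    · refine absurd (cons_mem_posList_node (i := ⟨0, List.length_pos_iff.mpr hts⟩).mpr ?_) hleaf
      exact nil_mem_posList _
    · refine ⟨i, p', hp', fun h => hleaf (cons_mem_posList_node.mpr h), fun r hr => hpS _ ?_⟩
      exact List.cons_prefix_cons.mpr ⟨rfl, hr⟩
  · rintro ⟨hnil, i, p, hp, hleaf, hpS⟩
    refine ⟨i :: p, cons_mem_posList_node.mpr hp, fun h => hleaf (cons_mem_posList_node.mp h), ?_⟩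
    intro r hr
    rcases List.prefix_cons_iff.mp hr with rfl | ⟨r', rfl, hr'⟩
    exacts [hnil, hpS r' hr']

theorem hasOpenPath_preimage_cons_inter {ts : List RTree} {i : Fin ts.length}
    {S U : Finset (List ℕ)} (hU : subtreePos ts i ⊆ U) :
    HasOpenPath ts[i] (List.cons i ⁻¹' ↑(S ∩ U)) ↔ HasOpenPath ts[i] (List.cons i ⁻¹' ↑S) := by
  rw [Finset.coe_inter, Set.preimage_inter]
  refine hasOpenPath_inter fun p hp => hU ?_
  simpa [subtreePos] using hp

theorem percProb_forall_not_hasOpenPath {q : ℝ} (ts : List RTree) :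
    percProb q (Finset.univ.biUnion (subtreePos ts))
        (fun S => ∀ i : Fin ts.length, ¬HasOpenPath ts[i] (List.cons i ⁻¹' ↑S)) =
      ∏ i : Fin ts.length, percProb q (posList ts[i]).toFinset (fun S => ¬HasOpenPath ts[i] S) := by
  calc _ = percProb q (Finset.univ.biUnion (subtreePos ts))
          (fun S => ∀ i ∈ (Finset.univ : Finset (Fin ts.length)),
            ¬HasOpenPath ts[i] (List.cons i ⁻¹' ↑(S ∩ subtreePos ts i))) :=
        percProb_congr fun S _ => by
          simp only [Finset.mem_univ, true_implies, hasOpenPath_preimage_cons_inter subset_rfl]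
    _ = ∏ i, percProb q (subtreePos ts i) (fun S => ¬HasOpenPath ts[i] (List.cons i ⁻¹' ↑S)) :=
        percProb_biUnion (pairwiseDisjoint_subtreePos ts)
          fun i S => ¬HasOpenPath ts[i] (List.cons i ⁻¹' ↑S)
    _ = _ := by
        refine Finset.prod_congr rfl fun i _ => ?_
        rw [subtreePos, percProb_image List.cons_injective]
        simp only [Finset.coe_image, Set.preimage_image_eq _ List.cons_injective]

theorem percProb_not_hasOpenPath_node {q : ℝ} {ts : List RTree} (hts : ts ≠ []) :
    percProb q (posList (.node ts)).toFinset (fun S => ¬HasOpenPath (.node ts) S) =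
      1 - q + q * ∏ i : Fin ts.length,
        percProb q (posList ts[i]).toFinset (fun S => ¬HasOpenPath ts[i] S) := by
  set W := Finset.univ.biUnion (subtreePos ts)
  have hdisj : Disjoint {[]} W := by simp [W, subtreePos]
  have hsplit : percProb q (posList (.node ts)).toFinset (fun S => HasOpenPath (.node ts) S) =
      percProb q {([] : List ℕ)} (fun S => [] ∈ S) *
        percProb q W (fun S => ∃ i : Fin ts.length, HasOpenPath ts[i] (List.cons i ⁻¹' ↑S)) := by
    rw [toFinset_posList_node, ← percProb_union hdisj]
    refine percProb_congr fun S _ => ?_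
    simp only [hasOpenPath_node hts, Finset.mem_inter, Finset.mem_singleton_self, and_true]
    exact and_congr_right' <| exists_congr fun i =>
      (hasOpenPath_preimage_cons_inter (Finset.subset_biUnion_of_mem _ (Finset.mem_univ i))).symm
  rw [percProb_not, hsplit, percProb_singleton, ← percProb_forall_not_hasOpenPath]
  simp_rw [← not_exists]
  rw [percProb_not]
  ring

theorem aeval_Ptree_leaf (x : Fin 2 → ℝ) : aeval x (RTree.Ptree (.node [])) = 1 + x 0 * x 1 := by
  simp [RTree.Ptree]

theorem aeval_Ptree_node {ts : List RTree} (hts : ts ≠ []) (x : Fin 2 → ℝ) :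
    aeval x (RTree.Ptree (.node ts)) =
      1 - x 0 + x 0 * ∏ i : Fin ts.length, aeval x (RTree.Ptree ts[i]) := by
  obtain ⟨t, ts, rfl⟩ := List.exists_cons_of_ne_nil hts
  simp only [Fin.getElem_fin]
  rw [Fin.prod_univ_fun_getElem (t :: ts) fun s => aeval x (RTree.Ptree s)]
  simp [RTree.Ptree, map_list_prod, Function.comp_def]

theorem percProb_not_hasOpenPath (q : ℝ) : ∀ T : RTree,
    percProb q (posList T).toFinset (fun S => ¬HasOpenPath T S) =
      aeval ![q, -1] (RTree.Ptree T)
  | .node [] => by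
    have hpos : (posList (.node [])).toFinset = {[]} := by simp [posList, posListAux]
    rw [percProb_not, hpos, percProb_congr fun S _ => hasOpenPath_leaf]
    simp [percProb_singleton, aeval_Ptree_leaf, sub_eq_add_neg]
  | .node (t :: ts) => by
    rw [percProb_not_hasOpenPath_node (List.cons_ne_nil t ts),
      aeval_Ptree_node (List.cons_ne_nil t ts)]
    simp only [Matrix.cons_val_zero]
    congr 2
    exact Finset.prod_congr rfl fun i _ => percProb_not_hasOpenPath q (t :: ts)[i]
  decreasing_by
    simp only [RTree.node.sizeOf_spec, Fin.getElem_fin]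
    have := List.sizeOf_lt_of_mem (List.getElem_mem i.2)
    omega

open scoped Classical in
theorem stmt7 (T : RTree) (q : ℝ) (hq : q ∈ Set.Icc (0 : ℝ) 1) :
    ∑ S ∈ ((posList T).toFinset.powerset.filter fun S =>
        ∃ p ∈ (posList T).toFinset, p ++ [0] ∉ (posList T).toFinset ∧
          ∀ r, r <+: p → r ∈ S),
      q ^ S.card * (1 - q) ^ ((posList T).toFinset.card - S.card) =
      1 - MvPolynomial.aeval ![q, (-1 : ℝ)] (RTree.Ptree T) := by
  rw [← percProb_not_hasOpenPath, percProb_not, sub_sub_cancel]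
  simp only [percProb, HasOpenPath, List.mem_toFinset, Finset.mem_coe]
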